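/- The coreness function is a fixed point of the H-index update: for every vertex v, coreness(v) equals the H-index of the multiset of corenesses of the neighbors of v. -/

import Mathlib

/-!
The `k`-core is the largest vertex set inducing minimum degree `≥ k`, so adding to it a vertex
with at least `k` neighbours inside keeps that property: `v` lies in the `k`-core iff at least
`k` of its neighbours do. Since `k ≤ coreness u` iff `u` lies in the `k`-core, this says that
`k ≤ coreness v` iff at least `k` neighbours have coreness `≥ k`, i.e. iff `k` is at most the
H-index of the neighbours' corenesses.
-/

open scoped Classical
open Finset

noncomputable section

variable {V : Type*} [Fintype V]

/-- `S` induces a subgraph of `G` in which every vertex has degree at least `k`. -/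
def IsCoreSet (G : SimpleGraph V) (k : ℕ) (S : Finset V) : Prop :=
  ∀ v ∈ S, k ≤ (S.filter (G.Adj v)).card

/-- The vertex set of the `k`-core of `G`: all vertices lying in some induced
subgraph of minimum degree at least `k`. -/
def coreSet (G : SimpleGraph V) (k : ℕ) : Finset V :=
  Finset.univ.filter fun v => ∃ S : Finset V, IsCoreSet G k S ∧ v ∈ S

/-- The coreness of `v`: the largest `k` such that `v` belongs to the `k`-core. -/
def coreness (G : SimpleGraph V) (v : V) : ℕ :=
  Nat.findGreatest (fun k => v ∈ coreSet G k) (Fintype.card V)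

/-- The H-index of a finite multiset `S` of naturals: the largest `h` such that
at least `h` elements of `S` are `≥ h`. -/
def hIndex (S : Multiset ℕ) : ℕ :=
  Nat.findGreatest (fun h => h ≤ (S.filter (fun x => h ≤ x)).card) (Multiset.card S)

namespace Nat

theorem le_findGreatest_iff_of_antitone {P : ℕ → Prop} [DecidablePred P] {n k : ℕ}
    (hP : ∀ ⦃i j⦄, i ≤ j → P j → P i) (hP0 : P 0) (hPn : ∀ k, P k → k ≤ n) :
    k ≤ Nat.findGreatest P n ↔ P k :=
  ⟨fun hk => hP hk (Nat.findGreatest_spec (Nat.zero_le n) hP0),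
    fun hk => Nat.le_findGreatest (hPn k hk) hk⟩

end Nat

theorem le_hIndex_iff {S : Multiset ℕ} {h : ℕ} :
    h ≤ hIndex S ↔ h ≤ Multiset.card (S.filter (h ≤ ·)) := by
  refine Nat.le_findGreatest_iff_of_antitone (fun i j hij hj => ?_) (Nat.zero_le _)
    (fun k hk => hk.trans (Multiset.card_le_card (Multiset.filter_le _ _)))
  exact hij.trans (hj.trans (Multiset.card_le_card
    (Multiset.monotone_filter_right _ (fun _ hx => hij.trans hx))))

theorem le_hIndex_map_iff {α : Type*} (s : Finset α) (f : α → ℕ) {h : ℕ} :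
    h ≤ hIndex (s.val.map f) ↔ h ≤ #(s.filter (h ≤ f ·)) := by
  rw [le_hIndex_iff, Multiset.filter_map, Multiset.card_map]
  rfl

section Cores

variable {G : SimpleGraph V} {j k : ℕ} {S : Finset V} {v : V}

theorem mem_coreSet_iff : v ∈ coreSet G k ↔ ∃ S, IsCoreSet G k S ∧ v ∈ S := by
  simp [coreSet]

omit [Fintype V] in
theorem IsCoreSet.anti (hS : IsCoreSet G k S) (hjk : j ≤ k) : IsCoreSet G j S :=
  fun u hu => hjk.trans (hS u hu)

theorem IsCoreSet.subset_coreSet (hS : IsCoreSet G k S) : S ⊆ coreSet G k :=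
  fun _ hu => mem_coreSet_iff.2 ⟨S, hS, hu⟩

omit [Fintype V] in
theorem IsCoreSet.insert (hS : IsCoreSet G k S) (hv : k ≤ #(S.filter (G.Adj v))) :
    IsCoreSet G k (insert v S) := by
  intro u hu
  rcases mem_insert.1 hu with rfl | hu
  · exact hv.trans (card_le_card (filter_subset_filter _ (subset_insert _ _)))
  · exact (hS u hu).trans (card_le_card (filter_subset_filter _ (subset_insert _ _)))

theorem coreSet_anti (G : SimpleGraph V) : Antitone (coreSet G) := by
  intro j k hjk v hv
  obtain ⟨S, hS, hvS⟩ := mem_coreSet_iff.1 hv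
  exact (hS.anti hjk).subset_coreSet hvS

theorem isCoreSet_coreSet (G : SimpleGraph V) (k : ℕ) : IsCoreSet G k (coreSet G k) := by
  intro v hv
  obtain ⟨S, hS, hvS⟩ := mem_coreSet_iff.1 hv
  exact (hS v hvS).trans (card_le_card (filter_subset_filter _ hS.subset_coreSet))

theorem filter_adj_eq_filter_neighborFinset (G : SimpleGraph V) (S : Finset V) (v : V) :
    S.filter (G.Adj v) = (G.neighborFinset v).filter (· ∈ S) := by
  ext u
  simp [and_comm]

theorem mem_coreSet_iff_le_card_neighbors :
    v ∈ coreSet G k ↔ k ≤ #((G.neighborFinset v).filter (· ∈ coreSet G k)) := by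
  rw [← filter_adj_eq_filter_neighborFinset]
  refine ⟨isCoreSet_coreSet G k v, fun hv => ?_⟩
  exact ((isCoreSet_coreSet G k).insert hv).subset_coreSet (mem_insert_self v _)

theorem le_coreness_iff : k ≤ coreness G v ↔ v ∈ coreSet G k := by
  refine Nat.le_findGreatest_iff_of_antitone (fun i j hij hj => coreSet_anti G hij hj)
    (IsCoreSet.subset_coreSet (fun _ _ => Nat.zero_le _) (mem_singleton_self v)) (fun m hm => ?_)
  exact (isCoreSet_coreSet G m v hm).trans (card_le_univ _)

end Cores

theorem coreness_fixed_point_hIndex (G : SimpleGraph V) (v : V) :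
    coreness G v = hIndex ((G.neighborFinset v).val.map (coreness G)) := by
  refine eq_of_forall_le_iff fun k => ?_
  rw [le_coreness_iff, mem_coreSet_iff_le_card_neighbors, le_hIndex_map_iff]
  simp only [le_coreness_iff]

end
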